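/- Let W = V ⊕ 𝔤 ⊕ V* with pairing as above (c nondegenerate) and let V₊ ⊂ W be a subspace with V₊ ∩ V* = {0}, dim V₊ = dim W − dim V, and such that the restriction of the pairing to V₊ is nondegenerate. Then the projection π_Q: W → V ⊕ 𝔤 restricted to V₊ is an isomorphism onto V ⊕ 𝔤. -/

import Mathlib

/-- The generalized tangent space `W = V ⊕ 𝔤 ⊕ V*`. -/
abbrev GenW (V G : Type*) [AddCommGroup V] [Module ℝ V] [AddCommGroup G] [Module ℝ G] :=
  V × G × Module.Dual ℝ V

/-- The canonical symmetric pairing on `W`. -/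
noncomputable def genPairing {V G : Type*} [AddCommGroup V] [Module ℝ V] [AddCommGroup G]
    [Module ℝ G] (c : G →ₗ[ℝ] G →ₗ[ℝ] ℝ) (w₁ w₂ : GenW V G) : ℝ :=
  (w₁.2.2 w₂.1 + w₂.2.2 w₁.1) / 2 + c w₁.2.1 w₂.2.1

/-- The inclusion `V* → W = V ⊕ 𝔤 ⊕ V*`. -/
noncomputable def dualIncl (V G : Type*) [AddCommGroup V] [Module ℝ V] [AddCommGroup G]
    [Module ℝ G] : Module.Dual ℝ V →ₗ[ℝ] GenW V G :=
  (0 : Module.Dual ℝ V →ₗ[ℝ] V).prod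
    ((0 : Module.Dual ℝ V →ₗ[ℝ] G).prod LinearMap.id)

/-- The projection `π_Q : W → V ⊕ 𝔤` forgetting the `V*`-component. -/
noncomputable def projQ (V G : Type*) [AddCommGroup V] [Module ℝ V] [AddCommGroup G]
    [Module ℝ G] : GenW V G →ₗ[ℝ] V × G :=
  (LinearMap.fst ℝ V (G × Module.Dual ℝ V)).prod
    ((LinearMap.fst ℝ G (Module.Dual ℝ V)) ∘ₗ (LinearMap.snd ℝ V (G × Module.Dual ℝ V)))

/-- if `V₊ ⊂ W = V ⊕ 𝔤 ⊕ V*` satisfies `V₊ ∩ V* = 0`,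
`dim V₊ = dim W − dim V`, and the pairing restricts nondegenerately to `V₊`, then the
projection `π_Q : W → V ⊕ 𝔤` restricts to a linear isomorphism of `V₊` onto `V ⊕ 𝔤`. -/
theorem admissible_metric_projQ_iso
    {V G : Type*} [AddCommGroup V] [Module ℝ V] [FiniteDimensional ℝ V]
    [AddCommGroup G] [Module ℝ G] [FiniteDimensional ℝ G]
    (c : G →ₗ[ℝ] G →ₗ[ℝ] ℝ)
    (hc_symm : ∀ r s, c r s = c s r)
    (hc_nondeg : ∀ r, (∀ s, c r s = 0) → r = 0)
    (Vplus : Submodule ℝ (GenW V G))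
    (h_transverse : Vplus ⊓ LinearMap.range (dualIncl V G) = ⊥)
    (h_rank : Module.finrank ℝ Vplus
      = Module.finrank ℝ (GenW V G) - Module.finrank ℝ V)
    (h_nondeg : ∀ v ∈ Vplus, (∀ v' ∈ Vplus, genPairing c v v' = 0) → v = 0) :
    Function.Bijective (fun v : Vplus => projQ V G (v : GenW V G)) := by

  classical
  set f : Vplus →ₗ[ℝ] V × G := (projQ V G).comp Vplus.subtype with hf
  have hker : LinearMap.ker f = ⊥ := by
    rw [Submodule.eq_bot_iff]
    rintro ⟨v, hv⟩ hker
    have h0 : projQ V G v = 0 := hker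
    have h1 : v.1 = 0 ∧ v.2.1 = 0 := by
      have := congrArg Prod.fst h0
      have := congrArg Prod.snd h0
      constructor <;> simpa [projQ] using ‹_›
    have hmem : v ∈ Vplus ⊓ LinearMap.range (dualIncl V G) := by
      refine ⟨hv, ⟨v.2.2, ?_⟩⟩
      simp [dualIncl, Prod.ext_iff, h1.1, h1.2]
    rw [h_transverse] at hmem
    exact Subtype.ext hmem
  have hinj : Function.Injective f := by
    intro a b hab
    rw [← sub_eq_zero] at hab ⊢
    rw [← map_sub] at hab
    have : a - b ∈ LinearMap.ker f := hab
    rw [hker] at this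
    exact this
  have hdimW : Module.finrank ℝ (GenW V G)
      = Module.finrank ℝ V + (Module.finrank ℝ G + Module.finrank ℝ V) := by
    simp [Module.finrank_prod, Subspace.dual_finrank_eq]
  have hdim : Module.finrank ℝ Vplus = Module.finrank ℝ (V × G) := by
    rw [h_rank, hdimW, Module.finrank_prod]
    omega
  have hsurj : Function.Surjective f := by
    have hrange : LinearMap.range f = ⊤ := by
      apply Submodule.eq_top_of_finrank_eq
      rw [LinearMap.finrank_range_of_inj hinj, hdim]
    exact LinearMap.range_eq_top.mp hrange
  exact ⟨hinj, hsurj⟩
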